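/- In the Dirac-uniform configuration with n₀ true p-values i.i.d. uniform(0,1) and n−n₀ false p-values equal to 0, for any step-up test with deterministic non-decreasing critical values 0 < α_{1:n} ≤ … ≤ α_{n:n} < 1, the expected number of false rejections satisfies E_DU(V | n₀) ≥ n₀·α_{n+1−n₀:n}. -/

import Mathlib

open MeasureTheory ProbabilityTheory Finset
open scoped Classical

/-- Number of rejections `R` of the step-up test with critical values `αc 1 ≤ … ≤ αc n`:
`R = max{i ∈ {1,…,n} : p_{i:n} ≤ αc i} = max{i : #{j : p_j ≤ αc i} ≥ i}` (`0` if empty). -/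
noncomputable def numRej {Ω ι : Type*} [Fintype ι] (n : ℕ) (αc : ℕ → ℝ)
    (q : ι → Ω → ℝ) (ω : Ω) : ℕ :=
  ((Finset.Icc 1 n).filter fun i =>
    i ≤ (Finset.univ.filter fun j => q j ω ≤ αc i).card).sup id

/-- Number `V` of falsely rejected true hypotheses: true `p`-values `≤ αc (max R 1)`
(with the convention `α_{0:n} = α_{1:n}`). -/
noncomputable def numFalseRej {Ω ι : Type*} [Fintype ι] (n : ℕ) (αc : ℕ → ℝ)
    (q : ι → Ω → ℝ) (T : Finset ι) (ω : Ω) : ℕ :=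
  (T.filter fun j => q j ω ≤ αc (max (numRej n αc q ω) 1)).card

/-!
Put `k = n + 1 - n₀`. Almost surely every false `p`-value is `0 ≤ α_{k:n}`, so a true `p`-value
`p_j ≤ α_{k:n}` joins the `n - n₀` false ones to give `k` `p`-values below `α_{k:n}`; hence `R ≥ k`
and `p_j ≤ α_{k:n} ≤ α_{R:n}` is rejected. Thus `V ≥ #{j ∈ T | p_j ≤ α_{k:n}}`, and each true
`p`-value, being uniform, lies below `α_{k:n}` with probability exactly `α_{k:n}`.
-/

theorem Finset.measurable_sup_filter {Ω α β : Type*} [MeasurableSpace Ω] [SemilatticeSup β]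
    [OrderBot β] [MeasurableSpace β] [MeasurableSup₂ β] (s : Finset α) (f : α → β)
    {P : α → Ω → Prop} [∀ a ω, Decidable (P a ω)] (hP : ∀ a ∈ s, MeasurableSet {ω | P a ω}) :
    Measurable fun ω => (s.filter (P · ω)).sup f := by
  induction s using Finset.induction_on with
  | empty => exact measurable_const
  | insert a s _ ih =>
    have hs := ih fun b hb => hP b (mem_insert_of_mem hb)
    simp only [filter_insert, apply_ite (Finset.sup · f), sup_insert]
    exact Measurable.ite (hP a (mem_insert_self a s)) (measurable_const.sup hs) hs

theorem measurable_numRej {Ω ι : Type*} [Fintype ι] [MeasurableSpace Ω] (n : ℕ) (αc : ℕ → ℝ)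
    {q : ι → Ω → ℝ} (hq : ∀ j, Measurable (q j)) :
    Measurable (numRej n αc q) := by
  refine Finset.measurable_sup_filter _ _ fun i _ => ?_
  have hcount : Measurable fun ω => #{j | q j ω ≤ αc i} := by
    simp only [card_filter]
    exact Finset.measurable_sum _ fun j _ =>
      Measurable.ite (measurableSet_le (hq j) measurable_const) measurable_const measurable_const
  exact hcount (measurableSet_Ici (a := i))

theorem card_filter_eq_sum_indicator {Ω ι : Type*} (T : Finset ι) (P : ι → Ω → Prop)
    [∀ j ω, Decidable (P j ω)] (ω : Ω) :
    (#{j ∈ T | P j ω} : ℝ) = ∑ j ∈ T, {ω | P j ω}.indicator 1 ω := by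
  simp only [card_filter, Nat.cast_sum, Nat.cast_ite, Nat.cast_one, Nat.cast_zero,
    Set.indicator_apply, Set.mem_ofPred_eq, Pi.one_apply]

section CardFilter

variable {Ω ι : Type*} [MeasurableSpace Ω] {μ : Measure Ω} [IsFiniteMeasure μ] (T : Finset ι)
  {P : ι → Ω → Prop} [∀ j ω, Decidable (P j ω)]

theorem integrable_card_filter (hP : ∀ j ∈ T, MeasurableSet {ω | P j ω}) :
    Integrable (fun ω => (#{j ∈ T | P j ω} : ℝ)) μ := by
  simp_rw [card_filter_eq_sum_indicator]
  exact integrable_finsetSum T fun j hj => (integrable_const 1).indicator (hP j hj)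

theorem integral_card_filter (hP : ∀ j ∈ T, MeasurableSet {ω | P j ω}) :
    ∫ ω, (#{j ∈ T | P j ω} : ℝ) ∂μ = ∑ j ∈ T, μ.real {ω | P j ω} := by
  simp_rw [card_filter_eq_sum_indicator]
  rw [integral_finsetSum T fun j hj => (integrable_const 1).indicator (hP j hj)]
  exact sum_congr rfl fun j hj => integral_indicator_one (hP j hj)

end CardFilter

theorem measureReal_setOf_le_of_map_eq_restrict_Ioo {Ω : Type*} [MeasurableSpace Ω]
    {μ : Measure Ω} {X : Ω → ℝ} (hX : Measurable X)
    (hunif : μ.map X = volume.restrict (Set.Ioo 0 1)) {c : ℝ} (hc0 : 0 ≤ c) (hc1 : c ≤ 1) :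
    μ.real {ω | X ω ≤ c} = c := by
  have hIcc : Set.Iic c ∩ Set.Icc 0 1 = Set.Icc 0 c := by
    ext x
    simp only [Set.mem_inter_iff, Set.mem_Iic, Set.mem_Icc]
    grind
  change μ.real (X ⁻¹' Set.Iic c) = c
  rw [← map_measureReal_apply hX measurableSet_Iic, hunif, Measure.restrict_congr_set Ioo_ae_eq_Icc,
    measureReal_restrict_apply measurableSet_Iic, hIcc, Real.volume_real_Icc_of_le hc0, sub_zero]

section StepUp

variable {Ω ι : Type*} [Fintype ι] {n : ℕ} {αc : ℕ → ℝ} {q : ι → Ω → ℝ} {ω : Ω}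

theorem numRej_le : numRej n αc q ω ≤ n :=
  Finset.sup_le fun _ hi => (mem_Icc.mp (mem_filter.mp hi).1).2

theorem le_numRej {i : ℕ} (hi1 : 1 ≤ i) (hin : i ≤ n) (hcount : i ≤ #{j | q j ω ≤ αc i}) :
    i ≤ numRej n αc q ω :=
  Finset.le_sup (f := id) (mem_filter.mpr ⟨mem_Icc.mpr ⟨hi1, hin⟩, hcount⟩)

theorem card_filter_le_numFalseRej [DecidableEq ι] (T : Finset ι) {k : ℕ} (hk1 : 1 ≤ k)
    (hkn : k ≤ n) (hkT : k ≤ #Tᶜ + 1) (hmono : ∀ i, k ≤ i → i ≤ n → αc k ≤ αc i)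
    (hfalse : ∀ j ∉ T, q j ω ≤ αc k) :
    #{j ∈ T | q j ω ≤ αc k} ≤ numFalseRej n αc q T ω := by
  refine card_le_card fun j hj => ?_
  obtain ⟨hjT, hjk⟩ := mem_filter.mp hj
  have hcount : k ≤ #{j' | q j' ω ≤ αc k} := calc
    k ≤ #(insert j Tᶜ) := by rwa [card_insert_of_notMem (by simpa using hjT)]
    _ ≤ _ := card_le_card <| insert_subset (by simpa using hjk) fun j' hj' =>
      by simpa using hfalse j' (by simpa using hj')
  have hR : k ≤ numRej n αc q ω := le_numRej hk1 hkn hcount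
  refine mem_filter.mpr ⟨hjT, hjk.trans ?_⟩
  rw [max_eq_left (hk1.trans hR)]
  exact hmono _ hR numRej_le

end StepUp

theorem du_expected_false_rejections_lower_bound_general
    {Ω : Type} [MeasurableSpace Ω] (μ : Measure Ω) [IsProbabilityMeasure μ]
    (n n₀ : ℕ) (hn₀1 : 1 ≤ n₀)
    (q : Fin n → Ω → ℝ) (hq : ∀ j, Measurable (q j))
    (T : Finset (Fin n)) (hT : T.card = n₀)
    (αc : ℕ → ℝ) (hpos : 0 < αc 1) (hlt : αc n < 1)
    (hmono : ∀ i j, 1 ≤ i → i ≤ j → j ≤ n → αc i ≤ αc j)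
    (hunif : ∀ i ∈ T, μ.map (q i) = volume.restrict (Set.Ioo 0 1))
    (hfalse : ∀ j ∉ T, ∀ᵐ ω ∂μ, q j ω = 0) :
    (n₀ : ℝ) * αc (n + 1 - n₀) ≤ ∫ ω, (numFalseRej n αc q T ω : ℝ) ∂μ := by
  set k := n + 1 - n₀
  have hn₀ : n₀ ≤ n := hT ▸ card_le_univ T |>.trans_eq (Fintype.card_fin n)
  have hk1 : 1 ≤ k := by omega
  have hkn : k ≤ n := by omega
  have hc0 : 0 ≤ αc k := hpos.le.trans (hmono 1 k le_rfl hk1 hkn)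
  have hc1 : αc k ≤ 1 := (hmono k n hk1 hkn le_rfl).trans hlt.le
  have hmeas : ∀ j ∈ T, MeasurableSet {ω | q j ω ≤ αc k} :=
    fun j _ => measurableSet_le (hq j) measurable_const
  have hV : Integrable (fun ω => (numFalseRej n αc q T ω : ℝ)) μ :=
    integrable_card_filter T fun j _ => measurableSet_le (hq j)
      ((measurable_from_top (f := fun r => αc (max r 1))).comp (measurable_numRej n αc hq))
  have hbound : ∀ᵐ ω ∂μ, (#{j ∈ T | q j ω ≤ αc k} : ℝ) ≤ numFalseRej n αc q T ω := by
    have hkT : k ≤ #Tᶜ + 1 := by rw [card_compl, Fintype.card_fin, hT]; omega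
    filter_upwards [(Filter.eventually_all_finset Tᶜ).mpr fun j hj => hfalse j (mem_compl.mp hj)]
      with ω hω
    exact_mod_cast card_filter_le_numFalseRej T hk1 hkn hkT (fun i => hmono k i hk1)
      fun j hj => (hω j (mem_compl.mpr hj)).le.trans hc0
  calc (n₀ : ℝ) * αc k = ∑ j ∈ T, μ.real {ω | q j ω ≤ αc k} := by
        rw [sum_congr rfl fun j hj =>
          measureReal_setOf_le_of_map_eq_restrict_Ioo (hq j) (hunif j hj) hc0 hc1,
          sum_const, hT, nsmul_eq_mul]
    _ = ∫ ω, (#{j ∈ T | q j ω ≤ αc k} : ℝ) ∂μ := (integral_card_filter T hmeas).symm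
    _ ≤ _ := integral_mono_ae (integrable_card_filter T hmeas) hV hbound

/-- In the Dirac-uniform configuration (`n₀` true uniform `p`-values, `n − n₀` false
`p`-values equal to `0`), any step-up test with non-decreasing critical values satisfies
`E_DU(V | n₀) ≥ n₀·α_{n+1−n₀:n}`. No dependence assumption on the uniforms is made. -/
theorem du_expected_false_rejections_lower_bound
    {Ω : Type} [MeasurableSpace Ω] (μ : Measure Ω) [IsProbabilityMeasure μ]
    (n n₀ : ℕ) (hn₀1 : 1 ≤ n₀) (hn₀ : n₀ ≤ n)
    (q : Fin n → Ω → ℝ) (hq : ∀ j, Measurable (q j))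
    (T : Finset (Fin n)) (hT : T.card = n₀)
    (αc : ℕ → ℝ) (hpos : 0 < αc 1) (hlt : αc n < 1)
    (hmono : ∀ i j, 1 ≤ i → i ≤ j → j ≤ n → αc i ≤ αc j)
    (hunif : ∀ i ∈ T, μ.map (q i) = volume.restrict (Set.Ioo 0 1))
    (hfalse : ∀ j ∉ T, ∀ᵐ ω ∂μ, q j ω = 0) :
    (n₀ : ℝ) * αc (n + 1 - n₀) ≤ ∫ ω, (numFalseRej n αc q T ω : ℝ) ∂μ :=
  du_expected_false_rejections_lower_bound_general μ n n₀ hn₀1 q hq T hT αc hpos hlt hmono hunif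
    hfalse
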